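/- Under randomization of Z, exclusion restriction, and monotonicity Y₀ ≤ Y₁, the denominator of the APCE for Helpable students satisfies: P(Y₁=1) − P(Y₀=1) ≤ 1 − max_z P(Y=0, R=1 | Z=z) − max_z P(Y=1, R=0 | Z=z). Consequently, if E[Y|Z=1] − E[Y|Z=0] ≥ 0, the APCE for Helpable students is bounded below by (E[Y|Z=1] − E[Y|Z=0]) / (1 − max_z P(Y=0,R=1|Z=z) − max_z P(Y=1,R=0|Z=z)), provided this denominator is positive. -/
import Mathlib


open Finset
open scoped Classical

namespace PS

/-- Probability of an event `A` under weight function `p` on a finite sample space. -/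
noncomputable def Prob {Ω : Type*} [Fintype Ω] (p : Ω → ℝ) (A : Ω → Prop) : ℝ :=
  ∑ ω ∈ Finset.univ.filter A, p ω

/-- Conditional probability `P(A | B)`. -/
noncomputable def CProb {Ω : Type*} [Fintype Ω] (p : Ω → ℝ) (A B : Ω → Prop) : ℝ :=
  Prob p (fun ω => A ω ∧ B ω) / Prob p B

/-- Conditional expectation `E[f | B]`. -/
noncomputable def CExp {Ω : Type*} [Fintype Ω] (p : Ω → ℝ) (f : Ω → ℝ) (B : Ω → Prop) : ℝ :=
  (∑ ω ∈ Finset.univ.filter B, p ω * f ω) / Prob p B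

/-- Indicator of a Boolean value, as a real number. -/
def ind (b : Bool) : ℝ := if b then 1 else 0

/-- Observed recommendation `R = R_Z`. -/
def obsR {Ω : Type*} (Z R₀ R₁ : Ω → Bool) (ω : Ω) : Bool := if Z ω then R₁ ω else R₀ ω

/-- Observed outcome `Y = Y_R` (exclusion restriction). -/
def obsY {Ω : Type*} (Rv Y₀ Y₁ : Ω → Bool) (ω : Ω) : Bool := if Rv ω then Y₁ ω else Y₀ ω

/-- `Z` is independent of the vector `(R₀, R₁, Y₀, Y₁)`. -/
def IndepZ {Ω : Type*} [Fintype Ω] (p : Ω → ℝ) (Z R₀ R₁ Y₀ Y₁ : Ω → Bool) : Prop :=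
  ∀ z a b c d : Bool,
    Prob p (fun ω => Z ω = z ∧ R₀ ω = a ∧ R₁ ω = b ∧ Y₀ ω = c ∧ Y₁ ω = d) =
      Prob p (fun ω => Z ω = z) *
        Prob p (fun ω => R₀ ω = a ∧ R₁ ω = b ∧ Y₀ ω = c ∧ Y₁ ω = d)

section Helpers
variable {Ω : Type*} [Fintype Ω]

lemma Prob_congr (p : Ω → ℝ) {A B : Ω → Prop} (h : ∀ ω, A ω ↔ B ω) :
    Prob p A = Prob p B := by
  have : A = B := funext fun ω => propext (h ω)
  rw [this]

lemma Prob_nonneg (p : Ω → ℝ) (hp : ∀ ω, 0 ≤ p ω) (A : Ω → Prop) : 0 ≤ Prob p A :=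
  Finset.sum_nonneg fun ω _ => hp ω

lemma Prob_of_empty (p : Ω → ℝ) {A : Ω → Prop} (h : ∀ ω, ¬ A ω) : Prob p A = 0 := by
  unfold Prob
  rw [Finset.filter_false_of_mem (fun ω _ => h ω), Finset.sum_empty]

lemma Prob_univ (p : Ω → ℝ) (hsum : ∑ ω, p ω = 1) : Prob p (fun _ => True) = 1 := by
  unfold Prob; simpa using hsum

lemma Prob_fiber (p : Ω → ℝ) (S : Ω → Prop) {β : Type*} [Fintype β] [DecidableEq β]
    (f : Ω → β) :
    ∑ v : β, Prob p (fun ω => S ω ∧ f ω = v) = Prob p S := by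
  unfold Prob
  rw [← Finset.sum_fiberwise (univ.filter S) f p]
  refine Finset.sum_congr rfl fun v _ => Finset.sum_congr ?_ fun _ _ => rfl
  ext ω; simp

lemma Prob_expandB (p : Ω → ℝ) (R₀ R₁ Y₀ Y₁ : Ω → Bool) (B : Ω → Prop)
    (Q : Bool → Bool → Bool → Bool → Prop) :
    Prob p (fun ω => B ω ∧ Q (R₀ ω) (R₁ ω) (Y₀ ω) (Y₁ ω)) =
      ∑ v : Bool × Bool × Bool × Bool,
        if Q v.1 v.2.1 v.2.2.1 v.2.2.2 then
          Prob p (fun ω => B ω ∧ R₀ ω = v.1 ∧ R₁ ω = v.2.1 ∧ Y₀ ω = v.2.2.1 ∧ Y₁ ω = v.2.2.2)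
        else 0 := by
  have main : ∑ v : Bool × Bool × Bool × Bool,
      (if Q v.1 v.2.1 v.2.2.1 v.2.2.2 then
        Prob p (fun ω => B ω ∧ R₀ ω = v.1 ∧ R₁ ω = v.2.1 ∧ Y₀ ω = v.2.2.1 ∧ Y₁ ω = v.2.2.2)
      else 0) =
      ∑ v : Bool × Bool × Bool × Bool,
        Prob p (fun ω => (B ω ∧ Q (R₀ ω) (R₁ ω) (Y₀ ω) (Y₁ ω)) ∧
          (fun ω => (R₀ ω, R₁ ω, Y₀ ω, Y₁ ω)) ω = v) := by
    refine Finset.sum_congr rfl fun v _ => ?_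
    by_cases h : Q v.1 v.2.1 v.2.2.1 v.2.2.2
    · rw [if_pos h]
      obtain ⟨a, b, c, d⟩ := v
      refine Prob_congr p fun ω => ?_
      simp only [Prod.mk.injEq]
      constructor
      · rintro ⟨hB, h1, h2, h3, h4⟩
        subst h1; subst h2; subst h3; subst h4
        exact ⟨⟨hB, h⟩, rfl, rfl, rfl, rfl⟩
      · rintro ⟨⟨hB, -⟩, h1, h2, h3, h4⟩
        exact ⟨hB, h1, h2, h3, h4⟩
    · rw [if_neg h]
      obtain ⟨a, b, c, d⟩ := v
      refine (Prob_of_empty p fun ω => ?_).symm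
      rintro ⟨⟨-, hQ⟩, hv⟩
      simp only [Prod.mk.injEq] at hv
      obtain ⟨h1, h2, h3, h4⟩ := hv
      rw [h1, h2, h3, h4] at hQ
      exact h hQ
  rw [main, Prob_fiber]

lemma Prob_expand (p : Ω → ℝ) (R₀ R₁ Y₀ Y₁ : Ω → Bool)
    (Q : Bool → Bool → Bool → Bool → Prop) :
    Prob p (fun ω => Q (R₀ ω) (R₁ ω) (Y₀ ω) (Y₁ ω)) =
      ∑ v : Bool × Bool × Bool × Bool,
        if Q v.1 v.2.1 v.2.2.1 v.2.2.2 then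
          Prob p (fun ω => R₀ ω = v.1 ∧ R₁ ω = v.2.1 ∧ Y₀ ω = v.2.2.1 ∧ Y₁ ω = v.2.2.2)
        else 0 := by
  have h := Prob_expandB p R₀ R₁ Y₀ Y₁ (fun _ => True) Q
  simpa using h

lemma Prob_indep (p : Ω → ℝ) (Z R₀ R₁ Y₀ Y₁ : Ω → Bool)
    (hindep : IndepZ p Z R₀ R₁ Y₀ Y₁) (z : Bool) (Q : Bool → Bool → Bool → Bool → Prop) :
    Prob p (fun ω => Z ω = z ∧ Q (R₀ ω) (R₁ ω) (Y₀ ω) (Y₁ ω)) =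
      Prob p (fun ω => Z ω = z) * Prob p (fun ω => Q (R₀ ω) (R₁ ω) (Y₀ ω) (Y₁ ω)) := by
  rw [Prob_expandB p R₀ R₁ Y₀ Y₁ (fun ω => Z ω = z) Q, Prob_expand p R₀ R₁ Y₀ Y₁ Q,
    Finset.mul_sum]
  refine Finset.sum_congr rfl fun v _ => ?_
  by_cases h : Q v.1 v.2.1 v.2.2.1 v.2.2.2
  · rw [if_pos h, if_pos h]
    exact hindep z v.1 v.2.1 v.2.2.1 v.2.2.2
  · rw [if_neg h, if_neg h, mul_zero]

lemma sum_ind (p : Ω → ℝ) (g : Ω → Bool) (B : Ω → Prop) :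
    (∑ ω ∈ Finset.univ.filter B, p ω * ind (g ω)) = Prob p (fun ω => g ω = true ∧ B ω) := by
  calc ∑ ω ∈ Finset.univ.filter B, p ω * ind (g ω)
      = ∑ ω ∈ Finset.univ.filter B, (if g ω = true ∧ B ω then p ω else 0) := by
        refine Finset.sum_congr rfl fun ω hω => ?_
        have hB : B ω := (Finset.mem_filter.mp hω).2
        cases h : g ω <;> simp [ind, h, hB]
    _ = ∑ ω ∈ Finset.univ, (if g ω = true ∧ B ω then p ω else 0) := by
        refine Finset.sum_subset (Finset.filter_subset _ _) fun ω _ hω => ?_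
        have hB : ¬ B ω := by
          intro hB; exact hω (Finset.mem_filter.mpr ⟨Finset.mem_univ ω, hB⟩)
        rw [if_neg (fun hc => hB hc.2)]
    _ = Prob p (fun ω => g ω = true ∧ B ω) := by
        unfold Prob; rw [Finset.sum_filter]
        exact Finset.sum_congr rfl fun ω _ => by split_ifs <;> rfl

lemma CExp_indicator (p : Ω → ℝ) (g : Ω → Bool) (B : Ω → Prop) :
    CExp p (fun ω => ind (g ω)) B = Prob p (fun ω => g ω = true ∧ B ω) / Prob p B := by
  unfold CExp
  rw [sum_ind]

lemma CExp_ind_sub (p : Ω → ℝ) (g h : Ω → Bool) (B : Ω → Prop) :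
    CExp p (fun ω => ind (g ω) - ind (h ω)) B =
      (Prob p (fun ω => g ω = true ∧ B ω) - Prob p (fun ω => h ω = true ∧ B ω)) / Prob p B := by
  unfold CExp
  rw [← sum_ind p g B, ← sum_ind p h B, ← Finset.sum_sub_distrib]
  congr 1
  exact Finset.sum_congr rfl fun ω _ => by ring

end Helpers

theorem stmt9 {Ω : Type*} [Fintype Ω] (p : Ω → ℝ) (Z R₀ R₁ Y₀ Y₁ : Ω → Bool)
    (hp : ∀ ω, 0 ≤ p ω) (hsum : ∑ ω, p ω = 1)
    (hZpos : ∀ z : Bool, 0 < Prob p (fun ω => Z ω = z))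
    (hindep : IndepZ p Z R₀ R₁ Y₀ Y₁)
    (hmono : ∀ ω, Y₀ ω = true → Y₁ ω = true)
    (hH : 0 < Prob p (fun ω => Y₀ ω = false ∧ Y₁ ω = true))
    (hD : 0 < 1 - max (CProb p (fun ω => obsY (obsR Z R₀ R₁) Y₀ Y₁ ω = false ∧ obsR Z R₀ R₁ ω = true) (fun ω => Z ω = true)) (CProb p (fun ω => obsY (obsR Z R₀ R₁) Y₀ Y₁ ω = false ∧ obsR Z R₀ R₁ ω = true) (fun ω => Z ω = false)) - max (CProb p (fun ω => obsY (obsR Z R₀ R₁) Y₀ Y₁ ω = true ∧ obsR Z R₀ R₁ ω = false) (fun ω => Z ω = true)) (CProb p (fun ω => obsY (obsR Z R₀ R₁) Y₀ Y₁ ω = true ∧ obsR Z R₀ R₁ ω = false) (fun ω => Z ω = false)))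
    (hITT : 0 ≤ CExp p (fun ω => ind (obsY (obsR Z R₀ R₁) Y₀ Y₁ ω)) (fun ω => Z ω = true) - CExp p (fun ω => ind (obsY (obsR Z R₀ R₁) Y₀ Y₁ ω)) (fun ω => Z ω = false)) :
    Prob p (fun ω => Y₁ ω = true) - Prob p (fun ω => Y₀ ω = true) ≤
      1 - max (CProb p (fun ω => obsY (obsR Z R₀ R₁) Y₀ Y₁ ω = false ∧ obsR Z R₀ R₁ ω = true) (fun ω => Z ω = true)) (CProb p (fun ω => obsY (obsR Z R₀ R₁) Y₀ Y₁ ω = false ∧ obsR Z R₀ R₁ ω = true) (fun ω => Z ω = false)) - max (CProb p (fun ω => obsY (obsR Z R₀ R₁) Y₀ Y₁ ω = true ∧ obsR Z R₀ R₁ ω = false) (fun ω => Z ω = true)) (CProb p (fun ω => obsY (obsR Z R₀ R₁) Y₀ Y₁ ω = true ∧ obsR Z R₀ R₁ ω = false) (fun ω => Z ω = false)) ∧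
    (CExp p (fun ω => ind (obsY (obsR Z R₀ R₁) Y₀ Y₁ ω)) (fun ω => Z ω = true) - CExp p (fun ω => ind (obsY (obsR Z R₀ R₁) Y₀ Y₁ ω)) (fun ω => Z ω = false)) / (1 - max (CProb p (fun ω => obsY (obsR Z R₀ R₁) Y₀ Y₁ ω = false ∧ obsR Z R₀ R₁ ω = true) (fun ω => Z ω = true)) (CProb p (fun ω => obsY (obsR Z R₀ R₁) Y₀ Y₁ ω = false ∧ obsR Z R₀ R₁ ω = true) (fun ω => Z ω = false)) - max (CProb p (fun ω => obsY (obsR Z R₀ R₁) Y₀ Y₁ ω = true ∧ obsR Z R₀ R₁ ω = false) (fun ω => Z ω = true)) (CProb p (fun ω => obsY (obsR Z R₀ R₁) Y₀ Y₁ ω = true ∧ obsR Z R₀ R₁ ω = false) (fun ω => Z ω = false))) ≤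
      CExp p (fun ω => ind (R₁ ω) - ind (R₀ ω)) (fun ω => Y₀ ω = false ∧ Y₁ ω = true) := by
  have hZt := hZpos true
  have hZf := hZpos false
  have hA1 : CProb p (fun ω => obsY (obsR Z R₀ R₁) Y₀ Y₁ ω = false ∧ obsR Z R₀ R₁ ω = true) (fun ω => Z ω = true) = Prob p (fun ω => R₁ ω = true ∧ Y₁ ω = false) := by
    have c : Prob p (fun ω => (obsY (obsR Z R₀ R₁) Y₀ Y₁ ω = false ∧ obsR Z R₀ R₁ ω = true) ∧ Z ω = true)
        = Prob p (fun ω => Z ω = true ∧ (R₁ ω = true ∧ Y₁ ω = false)) :=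
      Prob_congr p fun ω => by
        cases hz : Z ω <;> cases h1 : R₁ ω <;> cases h0 : R₀ ω <;> simp [obsR, obsY, hz, h1, h0]
    have f : Prob p (fun ω => Z ω = true ∧ (R₁ ω = true ∧ Y₁ ω = false))
        = Prob p (fun ω => Z ω = true) * Prob p (fun ω => R₁ ω = true ∧ Y₁ ω = false) :=
      Prob_indep p Z R₀ R₁ Y₀ Y₁ hindep true (fun _ b _ d => b = true ∧ d = false)
    simp only [CProb]
    rw [c, f, mul_comm, mul_div_assoc, div_self (ne_of_gt hZt), mul_one]
  have hA0 : CProb p (fun ω => obsY (obsR Z R₀ R₁) Y₀ Y₁ ω = false ∧ obsR Z R₀ R₁ ω = true) (fun ω => Z ω = false) = Prob p (fun ω => R₀ ω = true ∧ Y₁ ω = false) := by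
    have c : Prob p (fun ω => (obsY (obsR Z R₀ R₁) Y₀ Y₁ ω = false ∧ obsR Z R₀ R₁ ω = true) ∧ Z ω = false)
        = Prob p (fun ω => Z ω = false ∧ (R₀ ω = true ∧ Y₁ ω = false)) :=
      Prob_congr p fun ω => by
        cases hz : Z ω <;> cases h1 : R₁ ω <;> cases h0 : R₀ ω <;> simp [obsR, obsY, hz, h1, h0]
    have f : Prob p (fun ω => Z ω = false ∧ (R₀ ω = true ∧ Y₁ ω = false))
        = Prob p (fun ω => Z ω = false) * Prob p (fun ω => R₀ ω = true ∧ Y₁ ω = false) :=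
      Prob_indep p Z R₀ R₁ Y₀ Y₁ hindep false (fun a _ _ d => a = true ∧ d = false)
    simp only [CProb]
    rw [c, f, mul_comm, mul_div_assoc, div_self (ne_of_gt hZf), mul_one]
  have hB1 : CProb p (fun ω => obsY (obsR Z R₀ R₁) Y₀ Y₁ ω = true ∧ obsR Z R₀ R₁ ω = false) (fun ω => Z ω = true) = Prob p (fun ω => R₁ ω = false ∧ Y₀ ω = true) := by
    have c : Prob p (fun ω => (obsY (obsR Z R₀ R₁) Y₀ Y₁ ω = true ∧ obsR Z R₀ R₁ ω = false) ∧ Z ω = true)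
        = Prob p (fun ω => Z ω = true ∧ (R₁ ω = false ∧ Y₀ ω = true)) :=
      Prob_congr p fun ω => by
        cases hz : Z ω <;> cases h1 : R₁ ω <;> cases h0 : R₀ ω <;> simp [obsR, obsY, hz, h1, h0]
    have f : Prob p (fun ω => Z ω = true ∧ (R₁ ω = false ∧ Y₀ ω = true))
        = Prob p (fun ω => Z ω = true) * Prob p (fun ω => R₁ ω = false ∧ Y₀ ω = true) :=
      Prob_indep p Z R₀ R₁ Y₀ Y₁ hindep true (fun _ b c _ => b = false ∧ c = true)
    simp only [CProb]
    rw [c, f, mul_comm, mul_div_assoc, div_self (ne_of_gt hZt), mul_one]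
  have hB0 : CProb p (fun ω => obsY (obsR Z R₀ R₁) Y₀ Y₁ ω = true ∧ obsR Z R₀ R₁ ω = false) (fun ω => Z ω = false) = Prob p (fun ω => R₀ ω = false ∧ Y₀ ω = true) := by
    have c : Prob p (fun ω => (obsY (obsR Z R₀ R₁) Y₀ Y₁ ω = true ∧ obsR Z R₀ R₁ ω = false) ∧ Z ω = false)
        = Prob p (fun ω => Z ω = false ∧ (R₀ ω = false ∧ Y₀ ω = true)) :=
      Prob_congr p fun ω => by
        cases hz : Z ω <;> cases h1 : R₁ ω <;> cases h0 : R₀ ω <;> simp [obsR, obsY, hz, h1, h0]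
    have f : Prob p (fun ω => Z ω = false ∧ (R₀ ω = false ∧ Y₀ ω = true))
        = Prob p (fun ω => Z ω = false) * Prob p (fun ω => R₀ ω = false ∧ Y₀ ω = true) :=
      Prob_indep p Z R₀ R₁ Y₀ Y₁ hindep false (fun a _ c _ => a = false ∧ c = true)
    simp only [CProb]
    rw [c, f, mul_comm, mul_div_assoc, div_self (ne_of_gt hZf), mul_one]
  have hE1 : CExp p (fun ω => ind (obsY (obsR Z R₀ R₁) Y₀ Y₁ ω)) (fun ω => Z ω = true) = Prob p (fun ω => (R₁ ω = true ∧ Y₁ ω = true) ∨ (R₁ ω = false ∧ Y₀ ω = true)) := by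
    have c : Prob p (fun ω => obsY (obsR Z R₀ R₁) Y₀ Y₁ ω = true ∧ Z ω = true)
        = Prob p (fun ω => Z ω = true ∧ ((R₁ ω = true ∧ Y₁ ω = true) ∨ (R₁ ω = false ∧ Y₀ ω = true))) :=
      Prob_congr p fun ω => by
        cases hz : Z ω <;> cases h1 : R₁ ω <;> cases h0 : R₀ ω <;> simp [obsR, obsY, hz, h1, h0]
    have f : Prob p (fun ω => Z ω = true ∧ ((R₁ ω = true ∧ Y₁ ω = true) ∨ (R₁ ω = false ∧ Y₀ ω = true)))
        = Prob p (fun ω => Z ω = true) * Prob p (fun ω => (R₁ ω = true ∧ Y₁ ω = true) ∨ (R₁ ω = false ∧ Y₀ ω = true)) :=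
      Prob_indep p Z R₀ R₁ Y₀ Y₁ hindep true (fun _ b c d => (b = true ∧ d = true) ∨ (b = false ∧ c = true))
    rw [CExp_indicator, c, f, mul_comm, mul_div_assoc, div_self (ne_of_gt hZt), mul_one]
  have hE0 : CExp p (fun ω => ind (obsY (obsR Z R₀ R₁) Y₀ Y₁ ω)) (fun ω => Z ω = false) = Prob p (fun ω => (R₀ ω = true ∧ Y₁ ω = true) ∨ (R₀ ω = false ∧ Y₀ ω = true)) := by
    have c : Prob p (fun ω => obsY (obsR Z R₀ R₁) Y₀ Y₁ ω = true ∧ Z ω = false)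
        = Prob p (fun ω => Z ω = false ∧ ((R₀ ω = true ∧ Y₁ ω = true) ∨ (R₀ ω = false ∧ Y₀ ω = true))) :=
      Prob_congr p fun ω => by
        cases hz : Z ω <;> cases h1 : R₁ ω <;> cases h0 : R₀ ω <;> simp [obsR, obsY, hz, h1, h0]
    have f : Prob p (fun ω => Z ω = false ∧ ((R₀ ω = true ∧ Y₁ ω = true) ∨ (R₀ ω = false ∧ Y₀ ω = true)))
        = Prob p (fun ω => Z ω = false) * Prob p (fun ω => (R₀ ω = true ∧ Y₁ ω = true) ∨ (R₀ ω = false ∧ Y₀ ω = true)) :=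
      Prob_indep p Z R₀ R₁ Y₀ Y₁ hindep false (fun a _ c d => (a = true ∧ d = true) ∨ (a = false ∧ c = true))
    rw [CExp_indicator, c, f, mul_comm, mul_div_assoc, div_self (ne_of_gt hZf), mul_one]
  have hC : CExp p (fun ω => ind (R₁ ω) - ind (R₀ ω)) (fun ω => Y₀ ω = false ∧ Y₁ ω = true) =
      (Prob p (fun ω => R₁ ω = true ∧ (Y₀ ω = false ∧ Y₁ ω = true)) -
        Prob p (fun ω => R₀ ω = true ∧ (Y₀ ω = false ∧ Y₁ ω = true))) /
        Prob p (fun ω => Y₀ ω = false ∧ Y₁ ω = true) :=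
    CExp_ind_sub p R₁ R₀ _
  have hm0 : ∀ a b : Bool, Prob p (fun ω => R₀ ω = a ∧ R₁ ω = b ∧ Y₀ ω = true ∧ Y₁ ω = false) = 0 := by
    intro a b
    refine Prob_of_empty p fun ω => ?_
    rintro ⟨-, -, h2, h3⟩
    rw [hmono ω h2] at h3
    cases h3
  have hmn := fun (A : Ω → Prop) => Prob_nonneg p hp A
  have eT := (Prob_univ p hsum).symm.trans (Prob_expand p R₀ R₁ Y₀ Y₁ (fun _ _ _ _ => True))
  have eY1 := Prob_expand p R₀ R₁ Y₀ Y₁ (fun _ _ _ d => d = true)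
  have eY0 := Prob_expand p R₀ R₁ Y₀ Y₁ (fun _ _ c _ => c = true)
  have eH := Prob_expand p R₀ R₁ Y₀ Y₁ (fun _ _ c d => c = false ∧ d = true)
  have eA1 := Prob_expand p R₀ R₁ Y₀ Y₁ (fun _ b _ d => b = true ∧ d = false)
  have eA0 := Prob_expand p R₀ R₁ Y₀ Y₁ (fun a _ _ d => a = true ∧ d = false)
  have eB1 := Prob_expand p R₀ R₁ Y₀ Y₁ (fun _ b c _ => b = false ∧ c = true)
  have eB0 := Prob_expand p R₀ R₁ Y₀ Y₁ (fun a _ c _ => a = false ∧ c = true)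
  have eQ1 := Prob_expand p R₀ R₁ Y₀ Y₁ (fun _ b c d => (b = true ∧ d = true) ∨ (b = false ∧ c = true))
  have eQ0 := Prob_expand p R₀ R₁ Y₀ Y₁ (fun a _ c d => (a = true ∧ d = true) ∨ (a = false ∧ c = true))
  have eN1 := Prob_expand p R₀ R₁ Y₀ Y₁ (fun _ b c d => b = true ∧ (c = false ∧ d = true))
  have eN0 := Prob_expand p R₀ R₁ Y₀ Y₁ (fun a _ c d => a = true ∧ (c = false ∧ d = true))
  simp only [Fintype.sum_prod_type, Fintype.sum_bool, eq_self_iff_true, Bool.false_eq_true,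
    Bool.true_eq_false, true_and, and_true, false_and, and_false, true_or, or_true, false_or,
    or_false, and_self, or_self, if_true, if_false, add_zero, zero_add] at eT eY1 eY0 eH eA1 eA0 eB1 eB0 eQ1 eQ0 eN1 eN0
  have hHle : Prob p (fun ω => Y₀ ω = false ∧ Y₁ ω = true) ≤
      1 - max (Prob p (fun ω => R₁ ω = true ∧ Y₁ ω = false)) (Prob p (fun ω => R₀ ω = true ∧ Y₁ ω = false))
        - max (Prob p (fun ω => R₁ ω = false ∧ Y₀ ω = true)) (Prob p (fun ω => R₀ ω = false ∧ Y₀ ω = true)) := by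
    rcases max_cases (Prob p (fun ω => R₁ ω = true ∧ Y₁ ω = false)) (Prob p (fun ω => R₀ ω = true ∧ Y₁ ω = false)) with ⟨hx, -⟩ | ⟨hx, -⟩ <;>
    rcases max_cases (Prob p (fun ω => R₁ ω = false ∧ Y₀ ω = true)) (Prob p (fun ω => R₀ ω = false ∧ Y₀ ω = true)) with ⟨hy, -⟩ | ⟨hy, -⟩ <;>
    rw [hx, hy] <;>
    linarith [eT, eH, eA1, eA0, eB1, eB0, hm0 true true, hm0 true false, hm0 false true, hm0 false false,
      hmn (fun ω => R₀ ω = true ∧ R₁ ω = true ∧ Y₀ ω = true ∧ Y₁ ω = true),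
      hmn (fun ω => R₀ ω = true ∧ R₁ ω = true ∧ Y₀ ω = true ∧ Y₁ ω = false),
      hmn (fun ω => R₀ ω = true ∧ R₁ ω = true ∧ Y₀ ω = false ∧ Y₁ ω = true),
      hmn (fun ω => R₀ ω = true ∧ R₁ ω = true ∧ Y₀ ω = false ∧ Y₁ ω = false),
      hmn (fun ω => R₀ ω = true ∧ R₁ ω = false ∧ Y₀ ω = true ∧ Y₁ ω = true),
      hmn (fun ω => R₀ ω = true ∧ R₁ ω = false ∧ Y₀ ω = true ∧ Y₁ ω = false),
      hmn (fun ω => R₀ ω = true ∧ R₁ ω = false ∧ Y₀ ω = false ∧ Y₁ ω = true),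
      hmn (fun ω => R₀ ω = true ∧ R₁ ω = false ∧ Y₀ ω = false ∧ Y₁ ω = false),
      hmn (fun ω => R₀ ω = false ∧ R₁ ω = true ∧ Y₀ ω = true ∧ Y₁ ω = true),
      hmn (fun ω => R₀ ω = false ∧ R₁ ω = true ∧ Y₀ ω = true ∧ Y₁ ω = false),
      hmn (fun ω => R₀ ω = false ∧ R₁ ω = true ∧ Y₀ ω = false ∧ Y₁ ω = true),
      hmn (fun ω => R₀ ω = false ∧ R₁ ω = true ∧ Y₀ ω = false ∧ Y₁ ω = false),
      hmn (fun ω => R₀ ω = false ∧ R₁ ω = false ∧ Y₀ ω = true ∧ Y₁ ω = true),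
      hmn (fun ω => R₀ ω = false ∧ R₁ ω = false ∧ Y₀ ω = true ∧ Y₁ ω = false),
      hmn (fun ω => R₀ ω = false ∧ R₁ ω = false ∧ Y₀ ω = false ∧ Y₁ ω = true),
      hmn (fun ω => R₀ ω = false ∧ R₁ ω = false ∧ Y₀ ω = false ∧ Y₁ ω = false)]
  rw [hA1, hA0, hB1, hB0] at hD ⊢
  rw [hE1, hE0] at hITT ⊢
  rw [hC]
  constructor
  · have hyd : Prob p (fun ω => Y₁ ω = true) - Prob p (fun ω => Y₀ ω = true) =
        Prob p (fun ω => Y₀ ω = false ∧ Y₁ ω = true) := by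
      linarith [eY1, eY0, eH, hm0 true true, hm0 true false, hm0 false true, hm0 false false]
    linarith [hyd, hHle]
  · rw [div_le_div_iff₀ hD hH]
    have hid : Prob p (fun ω => (R₁ ω = true ∧ Y₁ ω = true) ∨ (R₁ ω = false ∧ Y₀ ω = true)) -
        Prob p (fun ω => (R₀ ω = true ∧ Y₁ ω = true) ∨ (R₀ ω = false ∧ Y₀ ω = true)) =
        Prob p (fun ω => R₁ ω = true ∧ (Y₀ ω = false ∧ Y₁ ω = true)) -
        Prob p (fun ω => R₀ ω = true ∧ (Y₀ ω = false ∧ Y₁ ω = true)) := by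
      linarith [eQ1, eQ0, eN1, eN0, hm0 true true, hm0 true false, hm0 false true, hm0 false false]
    rw [← hid]
    exact mul_le_mul_of_nonneg_left hHle hITT

end PS
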